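/- For any n×n Hermitian matrix X, δ(e^{iX}) ≺_w σ(X), where e^{iX} is the matrix exponential. -/

import Mathlib

open scoped InnerProductSpace ComplexOrder Matrix

/-- Singular values of a square complex matrix (in some fixed order). -/
noncomputable def singVals {n : ℕ} (A : Matrix (Fin n) (Fin n) ℂ) : Fin n → ℝ :=
  fun i => Real.sqrt ((Matrix.posSemidef_conjTranspose_mul_self A).1.eigenvalues i)

/-- Sum of the `k` largest entries of a vector: supremum of sums over subsets of size `k`. -/
noncomputable def sumK {n : ℕ} (f : Fin n → ℝ) (k : ℕ) : ℝ :=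
  sSup {x | ∃ s : Finset (Fin n), s.card = k ∧ x = ∑ i ∈ s, f i}

/-- The Ky-Fan `k`-norm: sum of the `k` largest singular values. -/
noncomputable def kyFan {n : ℕ} (A : Matrix (Fin n) (Fin n) ℂ) (k : ℕ) : ℝ :=
  sumK (singVals A) k

/-- The `k`-th discrepancy norm, via its minimal characterization. -/
noncomputable def discNorm {n : ℕ} (A : Matrix (Fin n) (Fin n) ℂ) (k : ℕ) : ℝ :=
  sInf {x | ∃ α : ℂ, x = kyFan (A - α • 1) k}

/-- The vector of discrepancy values. -/
noncomputable def discVals {n : ℕ} (A : Matrix (Fin n) (Fin n) ℂ) : Fin n → ℝ :=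
  fun i => discNorm A (i.1 + 1) - discNorm A i.1

/-- Weak majorization of vectors. -/
def WeakMaj {n : ℕ} (f g : Fin n → ℝ) : Prop :=
  ∀ k : ℕ, sumK f k ≤ sumK g k

/-- Decreasing rearrangement of a vector. -/
noncomputable def sortDesc {n : ℕ} (f : Fin n → ℝ) : Fin n → ℝ :=
  fun i => f (Tuple.sort f i.rev)

/-!
The Ky-Fan norms are concave in `k`, and so is their infimum `k ↦ discNorm A k`; hence the
discrepancy values decrease, and any `k` of them sum to at most
`discNorm A k ≤ ‖A - 1‖_(k)`. Diagonalising `X = U diag(λ) U*` gives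
`exp (I • X) - 1 = U diag(exp (I λⱼ) - 1) U*`, whose singular values `|exp (I λⱼ) - 1|`
are dominated one by one by the singular values `|λⱼ|` of `X`.
-/

section SumK

variable {n : ℕ} {f g : Fin n → ℝ} {k : ℕ}

lemma bddAbove_sumK_set (f : Fin n → ℝ) (k : ℕ) :
    BddAbove {x | ∃ s : Finset (Fin n), s.card = k ∧ x = ∑ i ∈ s, f i} :=
  ((Set.finite_range fun s : Finset (Fin n) => ∑ i ∈ s, f i).subset
    (by rintro x ⟨s, _, rfl⟩; exact ⟨s, rfl⟩)).bddAbove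

lemma le_sumK {s : Finset (Fin n)} (hs : s.card = k) : ∑ i ∈ s, f i ≤ sumK f k :=
  le_csSup (bddAbove_sumK_set f k) ⟨s, hs, rfl⟩

lemma sumK_le {c : ℝ} (hk : k ≤ n)
    (h : ∀ s : Finset (Fin n), s.card = k → ∑ i ∈ s, f i ≤ c) : sumK f k ≤ c := by
  obtain ⟨s, -, hs⟩ := Finset.exists_subset_card_eq (s := (Finset.univ : Finset (Fin n)))
    (by simpa using hk)
  exact csSup_le ⟨_, s, hs, rfl⟩ (by rintro x ⟨t, ht, rfl⟩; exact h t ht)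

lemma sumK_eq_zero_of_lt (h : n < k) : sumK f k = 0 := by
  have : {x | ∃ s : Finset (Fin n), s.card = k ∧ x = ∑ i ∈ s, f i} = ∅ :=
    Set.eq_empty_of_forall_notMem fun x ⟨s, hs, _⟩ => by
      have := Finset.card_le_univ s
      simp only [Fintype.card_fin] at this
      omega
  rw [sumK, this, Real.sSup_empty]

lemma sumK_zero : sumK f 0 = 0 :=
  le_antisymm (sumK_le (Nat.zero_le n) fun s hs => by simp [Finset.card_eq_zero.mp hs])
    (by simpa using le_sumK (f := f) (s := ∅) rfl)

lemma sumK_nonneg (hf : 0 ≤ f) (k : ℕ) : 0 ≤ sumK f k := by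
  rcases le_or_gt k n with hk | hk
  · obtain ⟨s, -, hs⟩ := Finset.exists_subset_card_eq (s := (Finset.univ : Finset (Fin n)))
      (by simpa using hk)
    exact (Finset.sum_nonneg fun i _ => hf i).trans (le_sumK hs)
  · rw [sumK_eq_zero_of_lt hk]

lemma sumK_mono (h : f ≤ g) (k : ℕ) : sumK f k ≤ sumK g k := by
  rcases le_or_gt k n with hk | hk
  · exact sumK_le hk fun s hs => (Finset.sum_le_sum fun i _ => h i).trans (le_sumK hs)
  · rw [sumK_eq_zero_of_lt hk, sumK_eq_zero_of_lt hk]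

lemma sumK_comp_perm (σ : Equiv.Perm (Fin n)) (f : Fin n → ℝ) (k : ℕ) :
    sumK (f ∘ σ) k = sumK f k := by
  have comp_le : ∀ (τ : Equiv.Perm (Fin n)) (g : Fin n → ℝ), sumK (g ∘ τ) k ≤ sumK g k := by
    intro τ g
    rcases le_or_gt k n with hk | hk
    · refine sumK_le hk fun s hs => ?_
      simpa using le_sumK (f := g) (s := s.map τ.toEmbedding) (by simpa using hs)
    · rw [sumK_eq_zero_of_lt hk, sumK_eq_zero_of_lt hk]
  refine le_antisymm (comp_le σ f) ?_
  simpa [Function.comp_assoc] using comp_le σ.symm (f ∘ σ)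

lemma sumK_add_sumK_le (hk : k + 2 ≤ n) :
    sumK f (k + 2) + sumK f k ≤ 2 * sumK f (k + 1) := by
  -- an element `x ∈ s \ t` moves from `s` to `t` and leaves both of size `k + 1`
  have exchange : ∀ s t : Finset (Fin n), s.card = k + 2 → t.card = k →
      ∑ i ∈ s, f i + ∑ i ∈ t, f i ≤ 2 * sumK f (k + 1) := by
    intro s t hs ht
    obtain ⟨x, hxs, hxt⟩ : ∃ x ∈ s, x ∉ t :=
      Finset.not_subset.mp fun hst => by have := Finset.card_le_card hst; omega
    have h₁ : ∑ i ∈ s.erase x, f i ≤ sumK f (k + 1) :=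
      le_sumK (by simp [Finset.card_erase_of_mem hxs, hs])
    have h₂ := le_sumK (f := f) (s := insert x t) (by rw [Finset.card_insert_of_notMem hxt, ht])
    rw [Finset.sum_insert hxt] at h₂
    linarith [Finset.sum_erase_add s f hxs]
  have : sumK f (k + 2) ≤ 2 * sumK f (k + 1) - sumK f k := by
    refine sumK_le hk fun s hs => ?_
    have : sumK f k ≤ 2 * sumK f (k + 1) - ∑ i ∈ s, f i :=
      sumK_le (by omega) fun t ht => by linarith [exchange s t hs ht]
    linarith
  linarith

end SumK

lemma Finset.sum_le_sum_range_of_antitoneOn {M : Type*} [AddCommMonoid M] [PartialOrder M]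
    [IsOrderedAddMonoid M] {n : ℕ} {g : ℕ → M} (hg : AntitoneOn g (Set.Iio n))
    (s : Finset (Fin n)) : ∑ i ∈ s, g i ≤ ∑ j ∈ range s.card, g j := by
  induction s using Finset.induction_on_max with
  | empty => simp
  | insert a s hlt ih =>
    have ha : a ∉ s := fun h => lt_irrefl a (hlt a h)
    have hcard : s.card ≤ a := by
      simpa using Finset.card_le_card (t := Finset.Iio a) fun x hx =>
        Finset.mem_Iio.mpr (hlt x hx)
    rw [Finset.sum_insert ha, Finset.card_insert_of_notMem ha, Finset.sum_range_succ, add_comm]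
    exact add_le_add ih (hg (by simp; omega) (by simp) hcard)

section DiscNorm

variable {n : ℕ} {A : Matrix (Fin n) (Fin n) ℂ} {k : ℕ}

lemma kyFan_nonneg (A : Matrix (Fin n) (Fin n) ℂ) (k : ℕ) : 0 ≤ kyFan A k :=
  sumK_nonneg (fun _ => Real.sqrt_nonneg _) k

lemma discNorm_le (α : ℂ) : discNorm A k ≤ kyFan (A - α • 1) k :=
  csInf_le ⟨0, by rintro x ⟨α, rfl⟩; exact kyFan_nonneg _ _⟩ ⟨α, rfl⟩

lemma le_discNorm {c : ℝ} (h : ∀ α : ℂ, c ≤ kyFan (A - α • 1) k) : c ≤ discNorm A k :=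
  le_csInf ⟨_, 0, rfl⟩ (by rintro x ⟨α, rfl⟩; exact h α)

lemma discNorm_nonneg : 0 ≤ discNorm A k :=
  le_discNorm fun _ => kyFan_nonneg _ _

lemma discNorm_zero : discNorm A 0 = 0 :=
  le_antisymm ((discNorm_le 0).trans_eq sumK_zero) discNorm_nonneg

/-- Each `kyFan (A - α • 1)` is concave in `k`, and the concavity inequality passes to the
infimum because its right-hand side is a single Ky-Fan norm. -/
lemma discNorm_add_discNorm_le (hk : k + 2 ≤ n) :
    discNorm A (k + 2) + discNorm A k ≤ 2 * discNorm A (k + 1) := by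
  have : (discNorm A (k + 2) + discNorm A k) / 2 ≤ discNorm A (k + 1) :=
    le_discNorm fun α => by
      have h₂ : discNorm A (k + 2) ≤ kyFan (A - α • 1) (k + 2) := discNorm_le α
      have h₀ : discNorm A k ≤ kyFan (A - α • 1) k := discNorm_le α
      have h : kyFan (A - α • 1) (k + 2) + kyFan (A - α • 1) k ≤
          2 * kyFan (A - α • 1) (k + 1) := sumK_add_sumK_le hk
      linarith
  linarith

lemma antitoneOn_discNorm_succ_sub :
    AntitoneOn (fun j => discNorm A (j + 1) - discNorm A j) (Set.Iio n) := by
  intro a _ b hb hab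
  induction b, hab using Nat.le_induction with
  | base => exact le_rfl
  | succ b hab ih =>
    have hb : b + 2 ≤ n := Set.mem_Iio.mp hb
    linarith [discNorm_add_discNorm_le (A := A) hb, ih (Set.mem_Iio.mpr (by omega))]

lemma sumK_discVals_le (A : Matrix (Fin n) (Fin n) ℂ) (k : ℕ) :
    sumK (discVals A) k ≤ discNorm A k := by
  rcases le_or_gt k n with hk | hk
  · refine sumK_le hk fun s hs => ?_
    calc ∑ i ∈ s, discVals A i
        ≤ ∑ j ∈ Finset.range s.card, (discNorm A (j + 1) - discNorm A j) :=
          Finset.sum_le_sum_range_of_antitoneOn antitoneOn_discNorm_succ_sub s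
      _ = discNorm A k := by rw [Finset.sum_range_sub, discNorm_zero, hs, sub_zero]
  · rw [sumK_eq_zero_of_lt hk]
    exact discNorm_nonneg

end DiscNorm

lemma exists_perm_eq_comp_of_map_univ_eq {ι α : Type*} [Fintype ι] {f g : ι → α}
    (h : Finset.univ.val.map f = Finset.univ.val.map g) : ∃ σ : Equiv.Perm ι, f = g ∘ σ := by
  classical
  have hfiber : ∀ c, Fintype.card {i // f i = c} = Fintype.card {i // g i = c} := fun c => by
    simpa [Fintype.card_subtype, Finset.card_def, Multiset.count_map, eq_comm] using
      congr_arg (Multiset.count c) h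
  exact ⟨Equiv.ofFiberEquiv fun c => Fintype.equivOfCardEq (hfiber c),
    funext fun i => (Equiv.ofFiberEquiv_map _ i).symm⟩

namespace Matrix

open Polynomial Unitary

variable {ι : Type*} [Fintype ι] [DecidableEq ι]

lemma IsHermitian.exists_perm_eigenvalues_eq {𝕜 : Type*} [RCLike 𝕜] {A : Matrix ι ι 𝕜}
    (hA : A.IsHermitian) {d : ι → ℝ} (h : A.charpoly = ∏ i, (X - C (d i : 𝕜))) :
    ∃ σ : Equiv.Perm ι, hA.eigenvalues = d ∘ σ := by
  have hroots : Finset.univ.val.map (RCLike.ofReal ∘ hA.eigenvalues : ι → 𝕜) =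
      Finset.univ.val.map (RCLike.ofReal ∘ d) := by
    rw [← hA.roots_charpoly_eq_eigenvalues, h,
      roots_prod _ _ (by simp [Finset.prod_ne_zero_iff, X_sub_C_ne_zero])]
    simp
  obtain ⟨σ, hσ⟩ := exists_perm_eq_comp_of_map_univ_eq hroots
  exact ⟨σ, funext fun i => RCLike.ofReal_injective (congr_fun hσ i)⟩

variable {R : Type*} [CommRing R] [StarRing R]

lemma charpoly_conjStarAlgAut (U : unitary (Matrix ι ι R)) (M : Matrix ι ι R) :
    (conjStarAlgAut R _ U M).charpoly = M.charpoly := by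
  rw [conjStarAlgAut_apply, charpoly_mul_comm, ← mul_assoc]
  simp

lemma exp_conjStarAlgAut {𝔸 : Type*} [NormedCommRing 𝔸] [StarRing 𝔸] [NormedAlgebra ℚ 𝔸]
    [CompleteSpace 𝔸]
    (U : unitary (Matrix ι ι 𝔸)) (M : Matrix ι ι 𝔸) :
    NormedSpace.exp (conjStarAlgAut 𝔸 _ U M) =
      conjStarAlgAut 𝔸 _ U (NormedSpace.exp M) := by
  simpa using Matrix.exp_units_conj (Unitary.toUnits U) M

end Matrix

open Matrix Unitary in
lemma singVals_conjStarAlgAut_diagonal {n : ℕ} (U : unitary (Matrix (Fin n) (Fin n) ℂ))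
    (w : Fin n → ℂ) :
    ∃ σ : Equiv.Perm (Fin n), singVals (conjStarAlgAut ℂ _ U (diagonal w)) = (‖w ·‖) ∘ σ := by
  set M := conjStarAlgAut ℂ _ U (diagonal w)
  have hMM : Mᴴ * M = conjStarAlgAut ℂ _ U (diagonal fun i => ((‖w i‖ ^ 2 : ℝ) : ℂ)) := by
    rw [← star_eq_conjTranspose, ← map_star, ← map_mul, star_eq_conjTranspose,
      diagonal_conjTranspose, diagonal_mul_diagonal]
    congr 2
    funext i
    simp [Complex.conj_mul']
  obtain ⟨σ, hσ⟩ := (posSemidef_conjTranspose_mul_self M).1.exists_perm_eigenvalues_eq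
    (d := fun i => ‖w i‖ ^ 2) (by rw [hMM, charpoly_conjStarAlgAut, charpoly_diagonal]; rfl)
  exact ⟨σ, funext fun i => by simp [singVals, hσ]⟩

open Matrix Unitary in
/-- For Hermitian X, δ(e^{iX}) ≺_w σ(X). -/
theorem discVals_exp_I_smul_hermitian (n : ℕ) (X : Matrix (Fin n) (Fin n) ℂ)
    (hX : X.IsHermitian) :
    WeakMaj (discVals (NormedSpace.exp (Complex.I • X))) (singVals X) := by
  set φ := conjStarAlgAut ℂ _ hX.eigenvectorUnitary
  set μ := hX.eigenvalues
  have hX' : X = φ (diagonal (RCLike.ofReal ∘ μ)) := hX.spectral_theorem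
  have hA : NormedSpace.exp (Complex.I • X) - (1 : ℂ) • 1 =
      φ (diagonal fun i => Complex.exp (Complex.I * μ i) - 1) := by
    rw [hX', ← map_smul, exp_conjStarAlgAut, ← map_one φ, ← map_smul, ← map_sub]
    congr 1
    rw [← diagonal_smul, exp_diagonal, one_smul, ← diagonal_one, ← diagonal_sub, Pi.exp_def]
    simp [← Complex.exp_eq_exp_ℂ]
  obtain ⟨σ, hσ⟩ := singVals_conjStarAlgAut_diagonal hX.eigenvectorUnitary
    fun i => Complex.exp (Complex.I * μ i) - 1
  obtain ⟨τ, hτ⟩ := singVals_conjStarAlgAut_diagonal hX.eigenvectorUnitary (RCLike.ofReal ∘ μ)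
  intro k
  calc sumK (discVals (NormedSpace.exp (Complex.I • X))) k
      ≤ discNorm (NormedSpace.exp (Complex.I • X)) k := sumK_discVals_le _ k
    _ ≤ kyFan (NormedSpace.exp (Complex.I • X) - (1 : ℂ) • 1) k := discNorm_le 1
    _ = sumK (fun i => ‖Complex.exp (Complex.I * μ i) - 1‖) k := by
      rw [kyFan, hA, hσ, sumK_comp_perm]
    _ ≤ sumK (fun i => ‖(μ i : ℂ)‖) k :=
      sumK_mono (fun i => by simpa using Real.norm_exp_I_mul_ofReal_sub_one_le) k
    _ = sumK (singVals X) k := by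
      rw [hX', hτ, sumK_comp_perm]
      rfl
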